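/- Exclusion principle: let M,N ∈ ℕ with M+N ≥ 1, and set q₊ = −1/(M+N), q₋ = (M−N)/(M+N). Let x ∈ H_ℝ be a unit vector and x^{⊗2n} ∈ K_n the simple tensor with all factors equal to x. Then ⟨x^{⊗2n}, x^{⊗2n}⟩_{q₊,q₋} > 0 for all n ≤ M, and ⟨x^{⊗2n}, x^{⊗2n}⟩_{q₊,q₋} = 0 for all n > M; in particular at most M identical particles can occupy the same state x⊗x. -/

import Mathlib

open scoped ComplexOrder

noncomputable section

namespace TypeB

/-- The nontrivial orbits (cycles) of a permutation. -/
def ntOrbits {X : Type*} (σ : Equiv.Perm X) : Set (Set X) :=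
  {O | ∃ i : X, σ i ≠ i ∧ O = {j | σ.SameCycle i j}}

def negSet (B : Set ℤ) : Set ℤ := (fun x : ℤ => -x) '' B

def negOrbits (σ : Equiv.Perm ℤ) : Set (Set ℤ) := {O ∈ ntOrbits σ | negSet O = O}

def posOrbits (σ : Equiv.Perm ℤ) : Set (Set ℤ) := {O ∈ ntOrbits σ | negSet O ≠ O}

def expPlus (σ : Equiv.Perm ℤ) : ℕ :=
  (∑ᶠ O ∈ posOrbits σ, (O.ncard - 1)) / 2 + ∑ᶠ O ∈ negOrbits σ, (O.ncard / 2 - 1)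

def negCount (σ : Equiv.Perm ℤ) : ℕ := (negOrbits σ).ncard

def phi (qp qm : ℂ) (σ : Equiv.Perm ℤ) : ℂ := qp ^ expPlus σ * qm ^ negCount σ

def Bset (n : ℕ) : Set (Equiv.Perm ℤ) :=
  {σ | (∀ i : ℤ, σ (-i) = -σ i) ∧ ∀ i : ℤ, (n : ℤ) < |i| → σ i = i}

/-- The classification set of parameters (Theorem 1.1). -/
def ClassSet (qp qm : ℂ) : Prop :=
  (∃ (M N : ℕ) (ε : ℤ), (ε = 1 ∨ ε = -1) ∧ M + N ≠ 0 ∧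
      qp = (ε : ℂ) / ((M : ℂ) + (N : ℂ)) ∧
      qm = ((M : ℂ) - (N : ℂ)) / ((M : ℂ) + (N : ℂ))) ∨
  (qp = 0 ∧ ∃ r : ℝ, qm = (r : ℂ) ∧ -1 ≤ r ∧ r ≤ 1)

/-- The index set [±n] of the 2n tensor factors of K_n. -/
abbrev SIdx (n : ℕ) := {i : ℤ // i ≠ 0 ∧ |i| ≤ (n : ℤ)}

instance (n : ℕ) : Fintype (SIdx n) :=
  Fintype.subtype ((Finset.Icc (-(n : ℤ)) (n : ℤ)).erase 0)
    (by intro x; simp [Finset.mem_erase, Finset.mem_Icc, abs_le])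

/-- H: the complexification of the real Hilbert space with orthonormal basis α. -/
abbrev Hsp (α : Type*) := α →₀ ℂ

/-- K_n = H^{⊗2n}, with basis indexed by functions [±n] → α. -/
abbrev Ksp (α : Type*) (n : ℕ) := (SIdx n → α) →₀ ℂ

/-- The inner product of H (antilinear on the left). -/
def innerH {α : Type*} (x y : Hsp α) : ℂ :=
  y.sum fun a c => (starRingEnd ℂ) (x a) * c

/-- The free inner product ⟨·,·⟩₀,₀ on K_n (antilinear on the left); on simple tensors
it is the product of the inner products of the factors. -/
def inner00 {α : Type*} {n : ℕ} (F G : Ksp α n) : ℂ :=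
  F.sum fun v c => (starRingEnd ℂ) c * G v

open Classical in
/-- The restriction of σ : Perm ℤ to [±n] (junk value 1 if σ does not preserve [±n];
elements of B(n) do preserve it). -/
def permRestrict (n : ℕ) (σ : Equiv.Perm ℤ) : Equiv.Perm (SIdx n) :=
  if h : ∀ i : ℤ, (i ≠ 0 ∧ |i| ≤ (n : ℤ)) ↔ (σ i ≠ 0 ∧ |σ i| ≤ (n : ℤ)) then
    Equiv.Perm.subtypePerm σ (fun i => (h i).symm) else 1

/-- The action of σ ∈ B(n) on K_n permuting the tensor factors:
x_{−n}⊗…⊗x_n ↦ x_{σ(−n)}⊗…⊗x_{σ(n)}. -/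
def act (α : Type*) [DecidableEq α] (n : ℕ) (σ : Equiv.Perm ℤ) :
    Ksp α n →ₗ[ℂ] Ksp α n :=
  Finsupp.lmapDomain ℂ ℂ (fun v : SIdx n → α => v ∘ (permRestrict n σ))

/-- The type-B symmetrization operator P^{(n)}_{q₊,q₋} = Σ_{σ∈B(n)} φ_{q₊,q₋}(σ)·σ. -/
def Pop (α : Type*) [DecidableEq α] (n : ℕ) (qp qm : ℂ) : Ksp α n →ₗ[ℂ] Ksp α n :=
  ∑ᶠ σ ∈ Bset n, phi qp qm σ • act α n σ

/-- The deformed (semi-)inner product ⟨ξ,η⟩_{q₊,q₋} = ⟨ξ, P^{(n)} η⟩₀,₀ on K_n. -/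
def innerQ (α : Type*) [DecidableEq α] (n : ℕ) (qp qm : ℂ) (F G : Ksp α n) : ℂ :=
  inner00 F (Pop α n qp qm G)

/-- R^{(n)}_{q₊,q₋} = id + q₋·J_n⁻ + q₊·J_n⁺. -/
def Rop (α : Type*) [DecidableEq α] (n : ℕ) (qp qm : ℂ) : Ksp α n →ₗ[ℂ] Ksp α n :=
  LinearMap.id
    + qm • act α n (Equiv.swap (-(n : ℤ)) (n : ℤ))
    + qp • ∑ j ∈ (Finset.Icc (-(n : ℤ) + 1) ((n : ℤ) - 1)).erase 0,
        act α n (Equiv.swap j (n : ℤ) * Equiv.swap (-j) (-(n : ℤ)))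

/-- The inclusion [±n] ⊆ [±(n+1)]. -/
def castIdx {n : ℕ} (i : SIdx n) : SIdx (n + 1) :=
  ⟨i.1, i.2.1, i.2.2.trans (by push_cast; omega)⟩

/-- The position −(n+1) in [±(n+1)]. -/
def negEnd (n : ℕ) : SIdx (n + 1) :=
  ⟨-((n : ℤ) + 1), by refine ⟨by omega, ?_⟩; rw [abs_le]; constructor <;> omega⟩

/-- The position n+1 in [±(n+1)]. -/
def posEnd (n : ℕ) : SIdx (n + 1) :=
  ⟨(n : ℤ) + 1, by refine ⟨by omega, ?_⟩; rw [abs_le]; constructor <;> omega⟩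

/-- Restriction of a basis index of K_{n+1} to the middle factors [±n]. -/
def downFn {α : Type*} {n : ℕ} (v : SIdx (n + 1) → α) : SIdx n → α :=
  fun i => v (castIdx i)

open Classical in
/-- Extension of a basis index of K_n by values a at position −(n+1) and b at n+1. -/
def upFn {α : Type*} {n : ℕ} (w : SIdx n → α) (a b : α) : SIdx (n + 1) → α :=
  fun i => if h : i.1 ≠ 0 ∧ |i.1| ≤ (n : ℤ) then w ⟨i.1, h⟩
           else if i.1 < 0 then a else b

/-- id ⊗ T ⊗ id: the operator T on K_n acting on the middle 2n tensor factors of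
K_{n+1}, with the identity on the factors at positions −(n+1) and n+1. -/
def embedMid (α : Type*) [DecidableEq α] (n : ℕ) (T : Ksp α n →ₗ[ℂ] Ksp α n) :
    Ksp α (n + 1) →ₗ[ℂ] Ksp α (n + 1) :=
  Finsupp.lsum ℂ fun v : SIdx (n + 1) → α =>
    LinearMap.toSpanSingleton ℂ _
      (Finsupp.mapDomain (fun w : SIdx n → α => upFn w (v (negEnd n)) (v (posEnd n)))
        (T (Finsupp.single (downFn v) 1)))

/-- The left-right creation operator b*(x⊗y) : K_n → K_{n+1}: it tensors x at the
leftmost position −(n+1) and y at the rightmost position n+1. -/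
def bstar (α : Type*) [DecidableEq α] (n : ℕ) (x y : Hsp α) :
    Ksp α n →ₗ[ℂ] Ksp α (n + 1) :=
  Finsupp.lsum ℂ fun w : SIdx n → α =>
    LinearMap.toSpanSingleton ℂ _
      (x.sum fun a xa => y.sum fun b yb => Finsupp.single (upFn w a b) (xa * yb))

/-- The free annihilation operator b(x⊗y) : K_{n+1} → K_n, the ⟨·,·⟩₀,₀-adjoint of
b*(x⊗y):  x_{−(n+1)}⊗…⊗x_{n+1} ↦ ⟨x,x_{−(n+1)}⟩⟨y,x_{n+1}⟩·x_{−n}⊗…⊗x_n. -/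
def bfree (α : Type*) [DecidableEq α] (n : ℕ) (x y : Hsp α) :
    Ksp α (n + 1) →ₗ[ℂ] Ksp α n :=
  Finsupp.lsum ℂ fun v : SIdx (n + 1) → α =>
    LinearMap.toSpanSingleton ℂ _
      (((starRingEnd ℂ) (x (v (negEnd n))) * (starRingEnd ℂ) (y (v (posEnd n)))) •
        Finsupp.single (downFn v) (1 : ℂ))

/-- The canonical embedding H_ℝ → H of the real Hilbert space into its
complexification. -/
def cplx {α : Type*} (x : α →₀ ℝ) : Hsp α :=
  x.mapRange Complex.ofReal (by simp)

/-- The simple tensor x^{⊗2n} ∈ K_n with all 2n factors equal to x. -/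
def tpow (α : Type*) [DecidableEq α] (x : Hsp α) (n : ℕ) : Ksp α n :=
  ∑ v ∈ Fintype.piFinset (fun _ : SIdx n => x.support),
    Finsupp.single v (∏ i : SIdx n, x (v i))

/-!
Every `σ ∈ B(n)` fixes `x^{⊗2n}` and `⟨x^{⊗2n}, x^{⊗2n}⟩₀,₀ = ‖x‖^{4n} = 1`, so the deformed square
norm is `∑_{σ ∈ B(n)} φ(σ)`. As coset representatives of `B(n)` in `B(n+1)` take the identity, the
sign change of `n+1`, and the double transpositions `(j, n+1)(-j, -(n+1))` for `0 < |j| ≤ n`. Right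
multiplication by a representative inserts `n+1` after `j` and `-(n+1)` after `-j` in the cycles of
`σ`: the sign change adds a self-negative `2`-cycle, and a double transposition raises
`‖ρ⁺‖ + ‖ρ⁻‖` by one without changing `ℓ(ρ⁻)`. So `φ` is multiplied by `1`, `q₋` or `q₊`, and
`∑_{σ ∈ B(n)} φ(σ) = ∏_{k<n} (1 + q₋ + 2k q₊)`, which for the given parameters is
`∏_{k<n} 2(M-k)/(M+N)`.
-/

open Equiv

section CycleSets

variable {X : Type*} {π : Perm X} {x y b : X}

def cycleSet (π : Perm X) (x : X) : Set X := {y | π.SameCycle x y}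

lemma mem_cycleSet : y ∈ cycleSet π x ↔ π.SameCycle x y := Iff.rfl

lemma self_mem_cycleSet (π : Perm X) (x : X) : x ∈ cycleSet π x := Perm.SameCycle.refl π x

lemma cycleSet_eq_of_mem (h : y ∈ cycleSet π x) : cycleSet π y = cycleSet π x :=
  Set.ext fun _ => ⟨(h : π.SameCycle x y).trans, h.symm.trans⟩

lemma cycleSet_of_apply_eq (h : π x = x) : cycleSet π x = {x} :=
  Set.ext fun _ => ⟨fun hy => (hy.eq_of_left h).symm, fun hy => hy ▸ Perm.SameCycle.refl π x⟩

lemma notMem_cycleSet_of_apply_eq (hb : π b = b) (hxb : x ≠ b) : b ∉ cycleSet π x :=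
  fun h => hxb ((h : π.SameCycle x b).eq_of_right hb)

lemma cycleSet_nontrivial_iff : (cycleSet π x).Nontrivial ↔ π x ≠ x := by
  refine ⟨fun hnt hx => ?_, fun hx => ⟨x, self_mem_cycleSet π x, π x, ⟨1, by simp⟩, hx.symm⟩⟩
  rw [cycleSet_of_apply_eq hx] at hnt
  exact Set.not_nontrivial_singleton hnt

lemma mem_ntOrbits_iff {O : Set X} :
    O ∈ ntOrbits π ↔ O.Nontrivial ∧ ∃ x, O = cycleSet π x := by
  refine ⟨fun ⟨x, hx, hO⟩ => ⟨hO ▸ cycleSet_nontrivial_iff.mpr hx, x, hO⟩, ?_⟩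
  rintro ⟨hnt, x, rfl⟩
  exact ⟨x, cycleSet_nontrivial_iff.mp hnt, rfl⟩

lemma apply_ne_of_mem_ntOrbits {O : Set X} (hO : O ∈ ntOrbits π) (hx : x ∈ O) : π x ≠ x := by
  obtain ⟨k, hk, rfl⟩ := hO
  exact fun h => hk ((hx : π.SameCycle k x).apply_eq_self_iff.mpr h)

lemma SameCycle.rel_of_step {r : X → X → Prop} (hr : Equivalence r) (hstep : ∀ x, r x (π x))
    (h : π.SameCycle x y) : r x y := by
  obtain ⟨k, rfl⟩ := h
  induction k using Int.induction_on with
  | zero => exact hr.refl x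
  | succ k ih =>
    rw [add_comm, zpow_one_add, Perm.mul_apply]
    exact hr.trans ih (hstep _)
  | pred k ih =>
    rw [sub_eq_neg_add, zpow_add, zpow_neg_one, Perm.mul_apply]
    refine hr.trans ih (hr.symm ?_)
    simpa using hstep (π⁻¹ ((π ^ (-(k : ℤ))) x))

end CycleSets

section InsertAfter

variable {X : Type*} {π : Perm X} {a b a' b' x y : X} {O : Set X}

/-- The cycle `O` with `b` inserted right after `a`, if `a ∈ O`. -/
def insertAfter (a b : X) (O : Set X) : Set X := O ∪ {y | y = b ∧ a ∈ O}

lemma mem_insertAfter : y ∈ insertAfter a b O ↔ y ∈ O ∨ (y = b ∧ a ∈ O) := Iff.rfl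

lemma subset_insertAfter : O ⊆ insertAfter a b O := Set.subset_union_left

lemma insertAfter_of_notMem (ha : a ∉ O) : insertAfter a b O = O := by
  simp [insertAfter, ha]

lemma insertAfter_of_mem (ha : a ∈ O) : insertAfter a b O = insert b O := by
  ext y; simp [mem_insertAfter, ha, or_comm]

lemma insertAfter_comm (h : a ≠ b') (h' : a' ≠ b) :
    insertAfter a b (insertAfter a' b' O) = insertAfter a' b' (insertAfter a b O) := by
  ext y
  simp only [mem_insertAfter]
  constructor <;> rintro ((hy | ⟨rfl, hy⟩) | ⟨rfl, hy | ⟨rfl, hy⟩⟩) <;> tauto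

lemma insertAfter_sdiff_singleton (hb : b ∉ O) : insertAfter a b O \ {b} = O := by
  ext y
  simp only [Set.mem_sdiff, mem_insertAfter, Set.mem_singleton_iff]
  constructor
  · rintro ⟨hy | ⟨rfl, -⟩, hyb⟩
    exacts [hy, absurd rfl hyb]
  · exact fun hy => ⟨Or.inl hy, by rintro rfl; exact hb hy⟩

lemma insertAfter_injOn : Set.InjOn (insertAfter a b) {O | b ∉ O} := fun O hO O' hO' h => by
  rw [← insertAfter_sdiff_singleton (a := a) hO, h, insertAfter_sdiff_singleton hO']

lemma ncard_insertAfter (ha : a ∈ O) (hb : b ∉ O) (hO : O.Finite) :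
    (insertAfter a b O).ncard = O.ncard + 1 := by
  rw [insertAfter_of_mem ha, Set.ncard_insert_of_notMem hb hO]

lemma ncard_insertAfter_sub_one (ha : a ∈ O) (hb : b ∉ O) (hO : O.Finite) :
    (insertAfter a b O).ncard - 1 = O.ncard - 1 + 1 := by
  have := (Set.ncard_pos hO).mpr ⟨a, ha⟩
  rw [ncard_insertAfter ha hb hO]
  omega

variable [DecidableEq X]

lemma sameCycle_mul_swap_iff (hb : π b = b) (hab : a ≠ b) :
    (π * swap a b).SameCycle x y ↔
      π.SameCycle (if x = b then a else x) (if y = b then a else y) := by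
  set τ := π * swap a b
  have hτa : τ a = b := by simp [τ, hb]
  have hτb : τ b = π a := by simp [τ]
  have hτ : ∀ z, z ≠ a → z ≠ b → τ z = π z := fun z hza hzb => by
    simp [τ, swap_apply_of_ne_of_ne hza hzb]
  have hπ : ∀ z, z ≠ b → π z ≠ b := fun z hz h => hz (π.injective (h.trans hb.symm))
  constructor
  · refine SameCycle.rel_of_step
      (r := fun u v => π.SameCycle (if u = b then a else u) (if v = b then a else v))
      ⟨fun _ => Perm.SameCycle.refl _ _, fun h => h.symm, fun h h' => h.trans h'⟩ fun u => ?_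
    by_cases hub : u = b
    · simpa [hub, hτb, hπ a hab] using Perm.SameCycle.refl π a
    by_cases hua : u = a
    · simpa [hua, hτa, hab] using Perm.SameCycle.refl π a
    · simpa [hub, hτ u hua hub, hπ u hub] using Perm.SameCycle.refl π u
  · have hab' : τ.SameCycle a b := ⟨1, by simpa using hτa⟩
    have hcollapse : ∀ z, τ.SameCycle z (if z = b then a else z) := fun z => by
      split_ifs with hz
      · exact hz ▸ hab'.symm
      · exact Perm.SameCycle.refl _ _
    have hle : ∀ {u v}, π.SameCycle u v → τ.SameCycle u v := by
      refine SameCycle.rel_of_step (Perm.SameCycle.equivalence τ) fun w => ?_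
      by_cases hwa : w = a
      · exact hwa ▸ hab'.trans ⟨1, by simpa using hτb⟩
      by_cases hwb : w = b
      · rw [hwb, hb]
      · rw [← hτ w hwa hwb]; exact ⟨1, by simp⟩
    exact fun h => (hcollapse x).trans ((hle h).trans (hcollapse y).symm)

lemma cycleSet_mul_swap (hb : π b = b) (hab : a ≠ b) (x : X) :
    cycleSet (π * swap a b) x = insertAfter a b (cycleSet π (if x = b then a else x)) := by
  have hx : (if x = b then a else x) ≠ b := by split_ifs with h <;> [exact hab; exact h]
  ext y
  rw [mem_cycleSet, sameCycle_mul_swap_iff hb hab, mem_insertAfter, mem_cycleSet, mem_cycleSet]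
  by_cases hy : y = b
  · have : ¬π.SameCycle (if x = b then a else x) b := fun h => hx (h.eq_of_right hb)
    simp [hy, this]
  · simp [hy]

lemma ntOrbits_mul_swap (hb : π b = b) (hab : a ≠ b) :
    ntOrbits (π * swap a b) = insertAfter a b '' insert (cycleSet π a) (ntOrbits π) := by
  ext O
  rw [mem_ntOrbits_iff]
  constructor
  · rintro ⟨hnt, x, rfl⟩
    set z := if x = b then a else x
    refine ⟨cycleSet π z, ?_, (cycleSet_mul_swap hb hab x).symm⟩
    by_cases hz : (cycleSet π z).Nontrivial
    · exact Or.inr (mem_ntOrbits_iff.mpr ⟨hz, z, rfl⟩)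
    have hsing : cycleSet π z = {z} :=
      (Set.not_nontrivial_iff.mp hz).eq_singleton_of_mem (self_mem_cycleSet π z)
    by_cases haz : a ∈ cycleSet π z
    · rw [hsing, Set.mem_singleton_iff] at haz
      exact Or.inl (by rw [haz])
    · rw [cycleSet_mul_swap hb hab, insertAfter_of_notMem haz] at hnt
      exact absurd hnt hz
  · rintro ⟨O, hO | hO, rfl⟩
    · refine ⟨?_, a, by rw [cycleSet_mul_swap hb hab, if_neg hab, hO]⟩
      rw [hO, insertAfter_of_mem (self_mem_cycleSet π a)]
      exact ⟨b, Set.mem_insert b _, a, Set.mem_insert_of_mem b (self_mem_cycleSet π a),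
        hab.symm⟩
    · obtain ⟨hnt, k, rfl⟩ := mem_ntOrbits_iff.mp hO
      have hkb : k ≠ b := fun h => cycleSet_nontrivial_iff.mp hnt (h ▸ hb)
      exact ⟨hnt.mono subset_insertAfter, k, by rw [cycleSet_mul_swap hb hab, if_neg hkb]⟩

end InsertAfter

lemma finsum_mem_eq_add_of_eq_off {α M : Type*} [AddCommMonoid M] {s : Set α} (hs : s.Finite)
    {a : α} (ha : a ∈ s) {f g : α → M} {c : M} (hfa : f a = g a + c)
    (hfg : ∀ x ∈ s, x ≠ a → f x = g x) : ∑ᶠ x ∈ s, f x = (∑ᶠ x ∈ s, g x) + c := by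
  have hnot : a ∉ s \ {a} := fun h => h.2 rfl
  rw [← Set.insert_eq_of_mem ha, ← Set.insert_sdiff_singleton,
    finsum_mem_insert _ hnot (hs.sdiff), finsum_mem_insert _ hnot (hs.sdiff),
    finsum_mem_congr rfl fun x hx => hfg x hx.1 hx.2, hfa, add_right_comm]

section Negation

variable {σ : Perm ℤ} {O : Set ℤ}

lemma mem_negSet {S : Set ℤ} {x : ℤ} : x ∈ negSet S ↔ -x ∈ S := by
  simp [negSet]

lemma negSet_negSet (S : Set ℤ) : negSet (negSet S) = S := by
  ext x; rw [mem_negSet, mem_negSet, neg_neg]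

lemma negSet_insertAfter (a b : ℤ) (O : Set ℤ) :
    negSet (insertAfter a b O) = insertAfter (-a) (-b) (negSet O) := by
  ext x
  simp only [mem_negSet, mem_insertAfter, neg_neg, neg_eq_iff_eq_neg]

lemma sameCycle_neg_iff (hneg : ∀ i, σ (-i) = -σ i) {x y : ℤ} :
    σ.SameCycle (-x) (-y) ↔ σ.SameCycle x y := by
  have hconj : Equiv.neg ℤ * σ * (Equiv.neg ℤ)⁻¹ = σ := by ext i; simp [hneg]
  conv_rhs => rw [← hconj]
  simp [Perm.sameCycle_conj]

lemma negSet_cycleSet (hneg : ∀ i, σ (-i) = -σ i) (x : ℤ) :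
    negSet (cycleSet σ x) = cycleSet σ (-x) := by
  ext y
  rw [mem_negSet, mem_cycleSet, mem_cycleSet, ← sameCycle_neg_iff hneg, neg_neg]

lemma negSet_mem_ntOrbits (hneg : ∀ i, σ (-i) = -σ i) (hO : O ∈ ntOrbits σ) :
    negSet O ∈ ntOrbits σ := by
  obtain ⟨hnt, x, rfl⟩ := mem_ntOrbits_iff.mp hO
  exact mem_ntOrbits_iff.mpr ⟨hnt.image neg_injective, -x, negSet_cycleSet hneg x⟩

end Negation

section Bset

variable {n : ℕ} {σ : Perm ℤ}

lemma Bset.apply_zero (h : σ ∈ Bset n) : σ 0 = 0 := by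
  have := h.1 0
  rw [neg_zero] at this
  omega

lemma Bset.ne_zero_and_abs_le (h : σ ∈ Bset n) {i : ℤ} (hi : σ i ≠ i) :
    i ≠ 0 ∧ |i| ≤ n :=
  ⟨fun h0 => hi (h0 ▸ Bset.apply_zero h), not_lt.mp fun hlt => hi (h.2 i hlt)⟩

lemma Bset.mem_SIdx_iff (h : σ ∈ Bset n) (i : ℤ) :
    (i ≠ 0 ∧ |i| ≤ n) ↔ (σ i ≠ 0 ∧ |σ i| ≤ n) := by
  by_cases hi : σ i = i
  · rw [hi]
  · have hσi : σ (σ i) ≠ σ i := fun h' => hi (σ.injective h')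
    exact iff_of_true (Bset.ne_zero_and_abs_le h hi) (Bset.ne_zero_and_abs_le h hσi)

lemma finite_SIdx (n : ℕ) : {i : ℤ | i ≠ 0 ∧ |i| ≤ n}.Finite :=
  (Set.finite_Icc (-(n : ℤ)) n).subset fun _ hi => abs_le.mp hi.2

lemma Bset.subset_SIdx_of_mem_ntOrbits (h : σ ∈ Bset n) {O : Set ℤ} (hO : O ∈ ntOrbits σ) :
    O ⊆ {i : ℤ | i ≠ 0 ∧ |i| ≤ n} :=
  fun _ hx => Bset.ne_zero_and_abs_le h (apply_ne_of_mem_ntOrbits hO hx)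

lemma Bset.finite_ntOrbits (h : σ ∈ Bset n) : (ntOrbits σ).Finite :=
  (finite_SIdx n).finite_subsets.subset fun _ hO => Bset.subset_SIdx_of_mem_ntOrbits h hO

lemma Bset.finite_of_mem_ntOrbits (h : σ ∈ Bset n) {O : Set ℤ} (hO : O ∈ ntOrbits σ) :
    O.Finite :=
  (finite_SIdx n).subset (Bset.subset_SIdx_of_mem_ntOrbits h hO)

lemma permRestrict_apply (h : σ ∈ Bset n) (i : SIdx n) :
    (permRestrict n σ i : ℤ) = σ i := by
  rw [permRestrict, dif_pos (Bset.mem_SIdx_iff h)]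
  rfl

lemma finite_Bset (n : ℕ) : (Bset n).Finite := by
  refine Set.Finite.of_finite_image (f := permRestrict n) (Set.toFinite _) ?_
  intro σ₁ h₁ σ₂ h₂ heq
  ext x
  by_cases hx : x ≠ 0 ∧ |x| ≤ n
  · simpa [permRestrict_apply h₁, permRestrict_apply h₂] using
      congrArg (fun e : Perm (SIdx n) => (e ⟨x, hx⟩ : ℤ)) heq
  · have hfix : ∀ {τ}, τ ∈ Bset n → τ x = x := fun hτ =>
      by_contra fun hne => hx (Bset.ne_zero_and_abs_le hτ hne)
    rw [hfix h₁, hfix h₂]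

end Bset

section Exponents

variable {n : ℕ} {σ τ : Perm ℤ} {qp qm : ℂ}

/-- `posSum σ = 2‖ρ⁺‖`: each mirror pair of cycles is counted twice. -/
def posSum (σ : Perm ℤ) : ℕ := ∑ᶠ O ∈ posOrbits σ, (O.ncard - 1)

/-- `negSum σ = ‖ρ⁻‖`. -/
def negSum (σ : Perm ℤ) : ℕ := ∑ᶠ O ∈ negOrbits σ, (O.ncard / 2 - 1)

lemma expPlus_eq_posSum_add_negSum (σ : Perm ℤ) : expPlus σ = posSum σ / 2 + negSum σ := rfl

lemma phi_eq_qm_mul_of_ntOrbits_eq_insert (h : σ ∈ Bset n) {A : Set ℤ}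
    (hτ : ntOrbits τ = insert A (ntOrbits σ)) (hA : A ∉ ntOrbits σ) (hAneg : negSet A = A)
    (hAcard : A.ncard = 2) : phi qp qm τ = qm * phi qp qm σ := by
  have hneg : negOrbits τ = insert A (negOrbits σ) := by
    ext O
    simp only [negOrbits, hτ, Set.mem_insert_iff, Set.mem_ofPred_eq]
    constructor
    · rintro ⟨rfl | hO, hO'⟩ <;> tauto
    · rintro (rfl | hO) <;> tauto
  have hpos : posOrbits τ = posOrbits σ := by
    ext O
    simp only [posOrbits, hτ, Set.mem_insert_iff, Set.mem_ofPred_eq]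
    constructor
    · rintro ⟨rfl | hO, hO'⟩ <;> tauto
    · tauto
  have hA' : A ∉ negOrbits σ := fun hA' => hA hA'.1
  have hfin : (negOrbits σ).Finite := (Bset.finite_ntOrbits h).subset fun _ hO => hO.1
  have hexp : expPlus τ = expPlus σ := by
    rw [expPlus, expPlus, hpos, hneg, finsum_mem_insert _ hA' hfin, hAcard, Nat.div_self two_pos,
      Nat.sub_self, zero_add]
  rw [phi, phi, hexp, negCount, negCount, hneg, Set.ncard_insert_of_notMem hA' hfin]
  ring

lemma phi_mul_swap_neg (h : σ ∈ Bset n) {m : ℤ} (hm : (n : ℤ) < |m|) :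
    phi qp qm (σ * swap m (-m)) = qm * phi qp qm σ := by
  have hm0 : m ≠ -m := fun h0 => by
    obtain rfl : m = 0 := by omega
    simp only [abs_zero] at hm
    omega
  have hσm : σ m = m := h.2 m hm
  have hnt : ntOrbits (σ * swap m (-m)) = insert {-m, m} (ntOrbits σ) := by
    rw [ntOrbits_mul_swap (h.2 (-m) (by rwa [abs_neg])) hm0, Set.image_insert_eq,
      cycleSet_of_apply_eq hσm, insertAfter_of_mem (Set.mem_singleton m)]
    congr
    refine (Set.image_congr fun O hO => insertAfter_of_notMem fun hmO => ?_).trans (Set.image_id _)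
    exact apply_ne_of_mem_ntOrbits hO hmO hσm
  refine phi_eq_qm_mul_of_ntOrbits_eq_insert h hnt (fun hA => ?_) ?_ (Set.ncard_pair hm0.symm)
  · exact apply_ne_of_mem_ntOrbits hA (Set.mem_insert_of_mem _ rfl) hσm
  · ext x
    simp only [mem_negSet, Set.mem_insert_iff, Set.mem_singleton_iff, neg_eq_iff_eq_neg, neg_neg]
    tauto

end Exponents

lemma negOrbits_posOrbits_of_ntOrbits_eq_image {τ : Perm ℤ} {g : Set ℤ → Set ℤ}
    {T : Set (Set ℤ)} (hnt : ntOrbits τ = g '' T) (hinj : Set.InjOn g T)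
    (hT : ∀ O ∈ T, negSet O ∈ T) (hg : ∀ O ∈ T, negSet (g O) = g (negSet O)) :
    negOrbits τ = g '' {O ∈ T | negSet O = O} ∧ posOrbits τ = g '' {O ∈ T | negSet O ≠ O} := by
  have key : ∀ O ∈ T, negSet (g O) = g O ↔ negSet O = O := fun O hO => by
    rw [hg O hO]; exact hinj.eq_iff (hT O hO) hO
  constructor <;> ext O <;> constructor
  · rintro ⟨hO, hneg⟩
    rw [hnt] at hO
    obtain ⟨O', hO', rfl⟩ := hO
    exact ⟨O', ⟨hO', (key O' hO').mp hneg⟩, rfl⟩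
  · rintro ⟨O', ⟨hO', hneg⟩, rfl⟩
    exact ⟨hnt ▸ ⟨O', hO', rfl⟩, (key O' hO').mpr hneg⟩
  · rintro ⟨hO, hneg⟩
    rw [hnt] at hO
    obtain ⟨O', hO', rfl⟩ := hO
    exact ⟨O', ⟨hO', mt (key O' hO').mpr hneg⟩, rfl⟩
  · rintro ⟨O', ⟨hO', hneg⟩, rfl⟩
    exact ⟨hnt ▸ ⟨O', hO', rfl⟩, mt (key O' hO').mp hneg⟩

section InsertPair

variable {n : ℕ} {σ : Perm ℤ} {m j : ℤ} {O : Set ℤ}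

lemma Bset.fixes_and_ne (h : σ ∈ Bset n) (hm : (n : ℤ) < |m|) (hj : |j| ≤ n) :
    σ m = m ∧ σ (-m) = -m ∧ j ≠ m ∧ j ≠ -m ∧ m ≠ -m := by
  have hm' : (n : ℤ) < |-m| := by rwa [abs_neg]
  refine ⟨h.2 m hm, h.2 (-m) hm', ?_, ?_, ?_⟩
  · rintro rfl; exact absurd hj (not_le.mpr hm)
  · rintro rfl; exact absurd hj (not_le.mpr hm')
  · intro h0
    obtain rfl : m = 0 := by omega
    simp only [abs_zero] at hm
    omega

lemma Bset.finite_cycleSet (h : σ ∈ Bset n) (x : ℤ) : (cycleSet σ x).Finite := by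
  by_cases hx : σ x = x
  · rw [cycleSet_of_apply_eq hx]; exact Set.finite_singleton x
  · exact Bset.finite_of_mem_ntOrbits h ⟨x, hx, rfl⟩

def insertPair (j m : ℤ) (O : Set ℤ) : Set ℤ := insertAfter (-j) (-m) (insertAfter j m O)

def orbitsWith (σ : Perm ℤ) (j : ℤ) : Set (Set ℤ) :=
  insert (cycleSet σ (-j)) (insert (cycleSet σ j) (ntOrbits σ))

lemma negSet_insertPair (hjm : j ≠ -m) (O : Set ℤ) :
    negSet (insertPair j m O) = insertPair j m (negSet O) := by
  rw [insertPair, insertPair, negSet_insertAfter, negSet_insertAfter, neg_neg, neg_neg,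
    insertAfter_comm hjm fun h => hjm (by rw [← h, neg_neg])]

lemma insertPair_of_notMem (hj : j ∉ O) (hj' : -j ∉ O) : insertPair j m O = O := by
  rw [insertPair, insertAfter_of_notMem hj, insertAfter_of_notMem hj']

lemma ncard_insertPair (hj : j ∈ O) (hj' : -j ∈ O) (hm : m ∉ O) (hm' : -m ∉ O)
    (hmm : m ≠ -m) (hO : O.Finite) : (insertPair j m O).ncard = O.ncard + 2 := by
  have hm'' : -m ∉ insertAfter j m O := by
    rintro (h | ⟨h, -⟩)
    exacts [hm' h, hmm h.symm]
  rw [insertPair, ncard_insertAfter (subset_insertAfter hj') hm''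
    (insertAfter_of_mem hj ▸ hO.insert m), ncard_insertAfter hj hm hO]

lemma ntOrbits_mul_swap_mul_swap (h : σ ∈ Bset n) (hm : (n : ℤ) < |m|) (hj : |j| ≤ n) :
    ntOrbits (σ * (swap j m * swap (-j) (-m))) = insertPair j m '' orbitsWith σ j := by
  obtain ⟨hσm, -, hjm, hjm', hmm⟩ := Bset.fixes_and_ne h hm hj
  have hσm' : (σ * swap j m) (-m) = -m := by
    rw [Perm.mul_apply, swap_apply_of_ne_of_ne (Ne.symm hjm') hmm.symm, h.1, hσm]
  rw [← mul_assoc, ntOrbits_mul_swap hσm' (neg_injective.ne hjm), ntOrbits_mul_swap hσm hjm,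
    cycleSet_mul_swap hσm hjm, if_neg fun h' => hjm' (by rw [← h', neg_neg]),
    ← Set.image_insert_eq, Set.image_image]
  rfl

lemma exists_eq_cycleSet_of_mem_orbitsWith (hO : O ∈ orbitsWith σ j) :
    ∃ k, O = cycleSet σ k := by
  rcases hO with rfl | rfl | hO
  exacts [⟨-j, rfl⟩, ⟨j, rfl⟩, (mem_ntOrbits_iff.mp hO).2]

lemma eq_cycleSet_of_mem_orbitsWith (hO : O ∈ orbitsWith σ j) {x : ℤ} (hx : x ∈ O) :
    O = cycleSet σ x := by
  obtain ⟨k, rfl⟩ := exists_eq_cycleSet_of_mem_orbitsWith hO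
  exact (cycleSet_eq_of_mem hx).symm

lemma mem_ntOrbits_of_mem_orbitsWith (hO : O ∈ orbitsWith σ j) (hnt : O.Nontrivial) :
    O ∈ ntOrbits σ :=
  mem_ntOrbits_iff.mpr ⟨hnt, exists_eq_cycleSet_of_mem_orbitsWith hO⟩

lemma notMem_of_mem_orbitsWith {b : ℤ} (hb : σ b = b) (hbj : j ≠ b) (hbj' : -j ≠ b)
    (hO : O ∈ orbitsWith σ j) : b ∉ O := by
  rcases hO with rfl | rfl | hO
  exacts [notMem_cycleSet_of_apply_eq hb hbj', notMem_cycleSet_of_apply_eq hb hbj,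
    fun hbO => apply_ne_of_mem_ntOrbits hO hbO hb]

lemma injOn_insertPair_orbitsWith (h : σ ∈ Bset n) (hm : (n : ℤ) < |m|) (hj : |j| ≤ n) :
    Set.InjOn (insertPair j m) (orbitsWith σ j) := by
  obtain ⟨hσm, hσm', hjm, hjm', hmm⟩ := Bset.fixes_and_ne h hm hj
  refine insertAfter_injOn.comp (insertAfter_injOn.mono fun O hO => ?_) fun O hO h' => ?_
  · exact notMem_of_mem_orbitsWith hσm hjm (fun h' => hjm' (by omega)) hO
  · rcases h' with h' | ⟨h', -⟩
    exacts [notMem_of_mem_orbitsWith hσm' hjm' (fun h' => hjm (by omega)) hO h', hmm h'.symm]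

lemma negOrbits_posOrbits_mul_swap_mul_swap (h : σ ∈ Bset n) (hm : (n : ℤ) < |m|)
    (hj : |j| ≤ n) (hj0 : j ≠ 0) :
    negOrbits (σ * (swap j m * swap (-j) (-m))) = insertPair j m '' negOrbits σ ∧
      posOrbits (σ * (swap j m * swap (-j) (-m))) =
        insertPair j m '' {O ∈ orbitsWith σ j | negSet O ≠ O} := by
  obtain ⟨-, -, -, hjm', -⟩ := Bset.fixes_and_ne h hm hj
  have hT : ∀ O ∈ orbitsWith σ j, negSet O ∈ orbitsWith σ j := by
    rintro O (rfl | rfl | hO)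
    · exact Or.inr (Or.inl (by rw [negSet_cycleSet h.1, neg_neg]))
    · exact Or.inl (negSet_cycleSet h.1 j)
    · exact Or.inr (Or.inr (negSet_mem_ntOrbits h.1 hO))
  have hself : {O ∈ orbitsWith σ j | negSet O = O} = negOrbits σ := by
    ext O
    refine ⟨fun ⟨hO, hneg⟩ => ⟨?_, hneg⟩, fun ⟨hO, hneg⟩ => ⟨Or.inr (Or.inr hO), hneg⟩⟩
    obtain ⟨k, rfl⟩ := exists_eq_cycleSet_of_mem_orbitsWith hO
    have hk0 : k ≠ 0 := fun hk => notMem_of_mem_orbitsWith (Bset.apply_zero h) hj0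
      (neg_ne_zero.mpr hj0) hO (hk ▸ self_mem_cycleSet σ k)
    refine mem_ntOrbits_of_mem_orbitsWith hO ⟨k, self_mem_cycleSet σ k, -k, ?_, by omega⟩
    rw [← hneg, mem_negSet, neg_neg]; exact self_mem_cycleSet σ k
  obtain ⟨hneg, hpos⟩ := negOrbits_posOrbits_of_ntOrbits_eq_image
    (ntOrbits_mul_swap_mul_swap h hm hj) (injOn_insertPair_orbitsWith h hm hj) hT
    fun O _ => negSet_insertPair hjm' O
  exact ⟨hself ▸ hneg, hpos⟩

lemma negOrbits_subset_orbitsWith : negOrbits σ ⊆ orbitsWith σ j :=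
  fun _ hO => Or.inr (Or.inr hO.1)

lemma negCount_mul_swap_mul_swap (h : σ ∈ Bset n) (hm : (n : ℤ) < |m|) (hj : |j| ≤ n)
    (hj0 : j ≠ 0) : negCount (σ * (swap j m * swap (-j) (-m))) = negCount σ := by
  rw [negCount, negCount, (negOrbits_posOrbits_mul_swap_mul_swap h hm hj hj0).1,
    ((injOn_insertPair_orbitsWith h hm hj).mono negOrbits_subset_orbitsWith).ncard_image]

lemma negSum_mul_swap_mul_swap (h : σ ∈ Bset n) (hm : (n : ℤ) < |m|) (hj : |j| ≤ n)
    (hj0 : j ≠ 0) : negSum (σ * (swap j m * swap (-j) (-m))) =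
      ∑ᶠ O ∈ negOrbits σ, ((insertPair j m O).ncard / 2 - 1) := by
  rw [negSum, (negOrbits_posOrbits_mul_swap_mul_swap h hm hj hj0).1, finsum_mem_image
    ((injOn_insertPair_orbitsWith h hm hj).mono negOrbits_subset_orbitsWith)]

lemma posSum_mul_swap_mul_swap (h : σ ∈ Bset n) (hm : (n : ℤ) < |m|) (hj : |j| ≤ n)
    (hj0 : j ≠ 0) : posSum (σ * (swap j m * swap (-j) (-m))) =
      ∑ᶠ O ∈ {O ∈ orbitsWith σ j | negSet O ≠ O}, ((insertPair j m O).ncard - 1) := by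
  rw [posSum, (negOrbits_posOrbits_mul_swap_mul_swap h hm hj hj0).2, finsum_mem_image
    ((injOn_insertPair_orbitsWith h hm hj).mono (Set.sep_subset _ _))]

lemma finsum_ncard_sub_one_orbitsWith :
    ∑ᶠ O ∈ {O ∈ orbitsWith σ j | negSet O ≠ O}, (O.ncard - 1) = posSum σ := by
  refine finsum_mem_inter_support_eq' _ _ _ fun O hO => ⟨fun ⟨hOW, hne⟩ => ⟨?_, hne⟩,
    fun hO' => ⟨Or.inr (Or.inr hO'.1), hO'.2⟩⟩
  have h1 : 1 < O.ncard := by simp only [Function.mem_support] at hO; omega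
  exact mem_ntOrbits_of_mem_orbitsWith hOW (Set.one_lt_ncard_iff_nontrivial_and_finite.mp h1).1

end InsertPair

section DoubleTransposition

variable {n : ℕ} {σ : Perm ℤ} {m j : ℤ} {O : Set ℤ} {qp qm : ℂ}

lemma neg_mem_cycleSet_of_negSet_eq (hc : negSet (cycleSet σ j) = cycleSet σ j) :
    -j ∈ cycleSet σ j :=
  hc ▸ mem_negSet.mpr (by rw [neg_neg]; exact self_mem_cycleSet σ j)

lemma insertPair_of_negSet_eq_of_ne (hc : negSet (cycleSet σ j) = cycleSet σ j)
    (hO : O ∈ orbitsWith σ j) (hne : O ≠ cycleSet σ j) : insertPair j m O = O :=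
  insertPair_of_notMem (fun hjO => hne (eq_cycleSet_of_mem_orbitsWith hO hjO)) fun hjO =>
    hne ((eq_cycleSet_of_mem_orbitsWith hO hjO).trans
      (cycleSet_eq_of_mem (neg_mem_cycleSet_of_negSet_eq hc)))

lemma posSum_mul_swap_mul_swap_of_negSet_eq (h : σ ∈ Bset n) (hm : (n : ℤ) < |m|)
    (hj : |j| ≤ n) (hj0 : j ≠ 0) (hc : negSet (cycleSet σ j) = cycleSet σ j) :
    posSum (σ * (swap j m * swap (-j) (-m))) = posSum σ := by
  rw [posSum_mul_swap_mul_swap h hm hj hj0, ← finsum_ncard_sub_one_orbitsWith]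
  exact finsum_mem_congr rfl fun O hO => by
    rw [insertPair_of_negSet_eq_of_ne hc hO.1 fun hOC => hO.2 (hOC ▸ hc)]

lemma negSum_mul_swap_mul_swap_of_negSet_eq (h : σ ∈ Bset n) (hm : (n : ℤ) < |m|)
    (hj : |j| ≤ n) (hj0 : j ≠ 0) (hc : negSet (cycleSet σ j) = cycleSet σ j) :
    negSum (σ * (swap j m * swap (-j) (-m))) = negSum σ + 1 := by
  obtain ⟨hσm, hσm', hjm, hjm', hmm⟩ := Bset.fixes_and_ne h hm hj
  have hjC := self_mem_cycleSet σ j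
  have hjC' := neg_mem_cycleSet_of_negSet_eq hc
  have hnt : (cycleSet σ j).Nontrivial := ⟨j, hjC, -j, hjC', by omega⟩
  have hCneg : cycleSet σ j ∈ negOrbits σ :=
    ⟨mem_ntOrbits_of_mem_orbitsWith (Or.inr (Or.inl rfl)) hnt, hc⟩
  rw [negSum_mul_swap_mul_swap h hm hj hj0, negSum]
  refine finsum_mem_eq_add_of_eq_off ((Bset.finite_ntOrbits h).subset fun _ hO => hO.1) hCneg
    ?_ fun O hO hne => by
      rw [insertPair_of_negSet_eq_of_ne hc (negOrbits_subset_orbitsWith hO) hne]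
  have h2 : 1 < (cycleSet σ j).ncard :=
    Set.one_lt_ncard_iff_nontrivial_and_finite.mpr ⟨hnt, Bset.finite_cycleSet h j⟩
  rw [ncard_insertPair hjC hjC' (notMem_cycleSet_of_apply_eq hσm hjm)
    (notMem_cycleSet_of_apply_eq hσm' hjm') hmm (Bset.finite_cycleSet h j)]
  omega

lemma negSum_mul_swap_mul_swap_of_negSet_ne (h : σ ∈ Bset n) (hm : (n : ℤ) < |m|)
    (hj : |j| ≤ n) (hj0 : j ≠ 0) (hc : negSet (cycleSet σ j) ≠ cycleSet σ j) :
    negSum (σ * (swap j m * swap (-j) (-m))) = negSum σ := by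
  rw [negSum_mul_swap_mul_swap h hm hj hj0, negSum]
  refine finsum_mem_congr rfl fun O hO => ?_
  have hOW : O ∈ orbitsWith σ j := negOrbits_subset_orbitsWith hO
  have hj1 : j ∉ O := fun hjO => hc (by rw [← eq_cycleSet_of_mem_orbitsWith hOW hjO]; exact hO.2)
  have hj2 : -j ∉ O := fun hjO => hc (by
    have hCj : cycleSet σ j = negSet O := by
      rw [eq_cycleSet_of_mem_orbitsWith hOW hjO, negSet_cycleSet h.1, neg_neg]
    rw [hCj, negSet_negSet, hO.2])
  rw [insertPair_of_notMem hj1 hj2]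

lemma posSum_mul_swap_mul_swap_of_negSet_ne (h : σ ∈ Bset n) (hm : (n : ℤ) < |m|)
    (hj : |j| ≤ n) (hj0 : j ≠ 0) (hc : negSet (cycleSet σ j) ≠ cycleSet σ j) :
    posSum (σ * (swap j m * swap (-j) (-m))) = posSum σ + 2 := by
  obtain ⟨hσm, hσm', hjm, hjm', -⟩ := Bset.fixes_and_ne h hm hj
  have hne : cycleSet σ (-j) ≠ cycleSet σ j := negSet_cycleSet h.1 j ▸ hc
  set S := {O ∈ orbitsWith σ j | negSet O ≠ O}
  have hSfin : S.Finite :=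
    (((Bset.finite_ntOrbits h).insert _).insert _).subset (Set.sep_subset _ _)
  have hCS : cycleSet σ j ∈ S := ⟨Or.inr (Or.inl rfl), hc⟩
  have hC'S : cycleSet σ (-j) ∈ S :=
    ⟨Or.inl rfl, by rw [negSet_cycleSet h.1, neg_neg]; exact hne.symm⟩
  have hstep₂ : ∑ᶠ O ∈ S, ((insertPair j m O).ncard - 1) =
      (∑ᶠ O ∈ S, ((insertAfter j m O).ncard - 1)) + 1 := by
    refine finsum_mem_eq_add_of_eq_off hSfin hC'S ?_ fun O hO hOC' => ?_
    · rw [insertPair, insertAfter_of_notMem fun hj' => hne (cycleSet_eq_of_mem hj').symm]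
      exact ncard_insertAfter_sub_one (self_mem_cycleSet σ (-j))
        (notMem_cycleSet_of_apply_eq hσm' (neg_injective.ne hjm)) (Bset.finite_cycleSet h (-j))
    · rw [insertPair, insertAfter_of_notMem]
      rintro (hjO | ⟨hjm'', -⟩)
      exacts [hOC' (eq_cycleSet_of_mem_orbitsWith hO.1 hjO), hjm' (by omega)]
  have hstep₁ : ∑ᶠ O ∈ S, ((insertAfter j m O).ncard - 1) = (∑ᶠ O ∈ S, (O.ncard - 1)) + 1 := by
    refine finsum_mem_eq_add_of_eq_off hSfin hCS ?_ fun O hO hOC => ?_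
    · exact ncard_insertAfter_sub_one (self_mem_cycleSet σ j)
        (notMem_cycleSet_of_apply_eq hσm hjm) (Bset.finite_cycleSet h j)
    · rw [insertAfter_of_notMem fun hjO => hOC (eq_cycleSet_of_mem_orbitsWith hO.1 hjO)]
  rw [posSum_mul_swap_mul_swap h hm hj hj0, hstep₂, hstep₁, finsum_ncard_sub_one_orbitsWith]

lemma phi_mul_swap_mul_swap (h : σ ∈ Bset n) (hm : (n : ℤ) < |m|) (hj : |j| ≤ n)
    (hj0 : j ≠ 0) : phi qp qm (σ * (swap j m * swap (-j) (-m))) = qp * phi qp qm σ := by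
  have hexp : expPlus (σ * (swap j m * swap (-j) (-m))) = expPlus σ + 1 := by
    rw [expPlus_eq_posSum_add_negSum, expPlus_eq_posSum_add_negSum]
    by_cases hc : negSet (cycleSet σ j) = cycleSet σ j
    · rw [posSum_mul_swap_mul_swap_of_negSet_eq h hm hj hj0 hc,
        negSum_mul_swap_mul_swap_of_negSet_eq h hm hj hj0 hc]
      omega
    · rw [posSum_mul_swap_mul_swap_of_negSet_ne h hm hj hj0 hc,
        negSum_mul_swap_mul_swap_of_negSet_ne h hm hj hj0 hc]
      omega
  rw [phi, phi, hexp, negCount_mul_swap_mul_swap h hm hj hj0]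
  ring

end DoubleTransposition

section Cosets

/-- Coset representatives: the cosets `Bset n * tau (n + 1) j`, `0 < |j| ≤ n + 1`, partition
`Bset (n + 1)`. -/
def tau (m j : ℤ) : Perm ℤ := if j = -m then swap m (-m) else swap j m * swap (-j) (-m)

variable {n : ℕ} {σ : Perm ℤ} {m j : ℤ}

lemma tau_apply (x : ℤ) : tau m j x =
    if j = -m then swap m (-m) x else swap j m (swap (-j) (-m) x) := by
  unfold tau; split_ifs <;> rfl

lemma tau_tau (hj0 : j ≠ 0) (hm0 : m ≠ 0) (x : ℤ) : tau m j (tau m j x) = x := by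
  simp only [tau_apply, swap_apply_def]
  grind

lemma tau_neg (hj0 : j ≠ 0) (hm0 : m ≠ 0) (x : ℤ) : tau m j (-x) = -tau m j x := by
  simp only [tau_apply, swap_apply_def]
  grind

lemma tau_apply_self (hj0 : j ≠ 0) : tau m j j = m := by
  simp only [tau_apply, swap_apply_def]
  grind

lemma tau_apply_of_lt_abs (hj : |j| ≤ |m|) {x : ℤ} (hx : |m| < |x|) : tau m j x = x := by
  simp only [tau_apply, swap_apply_def]
  rw [abs_le] at hj
  rcases abs_cases m with ⟨hm, -⟩ | ⟨hm, -⟩ <;> rcases abs_cases x with ⟨hx', -⟩ | ⟨hx', -⟩ <;>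
    grind

lemma abs_natCast_add_one (n : ℕ) : |(n : ℤ) + 1| = (n : ℤ) + 1 := abs_of_pos (by omega)

lemma mul_tau_mem_Bset (h : σ ∈ Bset n) (hj0 : j ≠ 0) (hj : |j| ≤ (n : ℤ) + 1) :
    σ * tau ((n : ℤ) + 1) j ∈ Bset (n + 1) := by
  refine ⟨fun i => by rw [Perm.mul_apply, Perm.mul_apply, tau_neg hj0 (by omega), h.1],
    fun i hi => ?_⟩
  push_cast at hi
  rw [Perm.mul_apply, tau_apply_of_lt_abs (by rwa [abs_natCast_add_one])
    (by rwa [abs_natCast_add_one]), h.2 i (by omega)]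

lemma Bset.inv_apply_succ (h : σ ∈ Bset (n + 1)) :
    σ⁻¹ ((n : ℤ) + 1) ≠ 0 ∧ |σ⁻¹ ((n : ℤ) + 1)| ≤ (n : ℤ) + 1 := by
  set k := σ⁻¹ ((n : ℤ) + 1)
  have hk : σ k = (n : ℤ) + 1 := by simp [k]
  by_cases hfix : σ k = k
  · rw [← hfix, hk, abs_natCast_add_one]; omega
  · exact_mod_cast Bset.ne_zero_and_abs_le h hfix

lemma mul_tau_inv_mem_Bset (h : σ ∈ Bset (n + 1)) :
    σ * tau ((n : ℤ) + 1) (σ⁻¹ ((n : ℤ) + 1)) ∈ Bset n := by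
  obtain ⟨hk0, hk⟩ := Bset.inv_apply_succ h
  set k := σ⁻¹ ((n : ℤ) + 1)
  have hσk : σ k = (n : ℤ) + 1 := by simp [k]
  have htau : tau ((n : ℤ) + 1) k ((n : ℤ) + 1) = k := by
    simpa only [tau_apply_self hk0] using tau_tau (m := (n : ℤ) + 1) hk0 (by omega) k
  refine ⟨fun i => by rw [Perm.mul_apply, Perm.mul_apply, tau_neg hk0 (by omega), h.1],
    fun i hi => ?_⟩
  rw [Perm.mul_apply]
  rcases (Int.add_one_le_iff.mpr hi).lt_or_eq with hi' | hi'
  · rw [tau_apply_of_lt_abs (by rwa [abs_natCast_add_one]) (by rwa [abs_natCast_add_one]),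
      h.2 i (by push_cast; omega)]
  · rcases abs_choice i with hi'' | hi'' <;> rw [hi''] at hi'
    · rw [← hi', htau, hσk]
    · rw [← neg_neg i, ← hi', tau_neg hk0 (by omega), htau, h.1, hσk]

lemma sum_Bset_succ {M : Type*} [AddCommMonoid M] (f : Perm ℤ → M) (n : ℕ) :
    ∑ σ ∈ (finite_Bset (n + 1)).toFinset, f σ =
      ∑ j ∈ (Finset.Icc (-((n : ℤ) + 1)) ((n : ℤ) + 1)).erase 0,
        ∑ σ ∈ (finite_Bset n).toFinset, f (σ * tau ((n : ℤ) + 1) j) := by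
  have hm0 : (n : ℤ) + 1 ≠ 0 := by omega
  have hJ : ∀ {j : ℤ}, j ∈ (Finset.Icc (-((n : ℤ) + 1)) ((n : ℤ) + 1)).erase 0 ↔
      j ≠ 0 ∧ |j| ≤ (n : ℤ) + 1 := by
    intro j; rw [Finset.mem_erase, Finset.mem_Icc, abs_le]
  have htau : ∀ {j : ℤ}, j ≠ 0 → tau ((n : ℤ) + 1) j * tau ((n : ℤ) + 1) j = 1 :=
    fun hj0 => Equiv.ext (tau_tau hj0 hm0)
  rw [← Finset.sum_product']
  refine Finset.sum_bij' (fun σ _ => (σ⁻¹ ((n : ℤ) + 1), σ * tau ((n : ℤ) + 1) (σ⁻¹ ((n : ℤ) + 1))))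
    (fun p _ => p.2 * tau ((n : ℤ) + 1) p.1) (fun σ hσ => ?_) (fun p hp => ?_) (fun σ hσ => ?_)
    (fun p hp => ?_) (fun σ hσ => ?_)
  · rw [Set.Finite.mem_toFinset] at hσ
    exact Finset.mem_product.mpr ⟨hJ.mpr (Bset.inv_apply_succ hσ),
      (Set.Finite.mem_toFinset _).mpr (mul_tau_inv_mem_Bset hσ)⟩
  · obtain ⟨hj, hσ⟩ := Finset.mem_product.mp hp
    exact (Set.Finite.mem_toFinset _).mpr
      (mul_tau_mem_Bset ((Set.Finite.mem_toFinset _).mp hσ) (hJ.mp hj).1 (hJ.mp hj).2)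
  · rw [Set.Finite.mem_toFinset] at hσ
    rw [mul_assoc, htau (Bset.inv_apply_succ hσ).1, mul_one]
  · obtain ⟨hj, hσ⟩ := Finset.mem_product.mp hp
    have hσ' : p.2 ∈ Bset n := (Set.Finite.mem_toFinset _).mp hσ
    have hinv : (p.2 * tau ((n : ℤ) + 1) p.1)⁻¹ ((n : ℤ) + 1) = p.1 := by
      rw [Perm.inv_eq_iff_eq, Perm.mul_apply, tau_apply_self (hJ.mp hj).1,
        hσ'.2 _ (by rw [abs_natCast_add_one]; omega)]
    rw [hinv, mul_assoc, htau (hJ.mp hj).1, mul_one]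
  · rw [Set.Finite.mem_toFinset] at hσ
    rw [mul_assoc, htau (Bset.inv_apply_succ hσ).1, mul_one]

end Cosets

section ProductFormula

variable {n : ℕ} {σ : Perm ℤ} {j : ℤ} {qp qm : ℂ}

def cosetWeight (qp qm : ℂ) (m j : ℤ) : ℂ := if j = m then 1 else if j = -m then qm else qp

lemma phi_mul_tau (h : σ ∈ Bset n) (hj0 : j ≠ 0) (hj : |j| ≤ (n : ℤ) + 1) :
    phi qp qm (σ * tau ((n : ℤ) + 1) j) = cosetWeight qp qm ((n : ℤ) + 1) j * phi qp qm σ := by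
  have hm : (n : ℤ) < |(n : ℤ) + 1| := by rw [abs_natCast_add_one]; omega
  rw [cosetWeight, tau]
  by_cases hjm : j = (n : ℤ) + 1
  · rw [if_neg (by omega), if_pos hjm, hjm, swap_self, swap_self, one_mul]
    rfl
  by_cases hjm' : j = -((n : ℤ) + 1)
  · rw [if_pos hjm', if_neg hjm, if_pos hjm']
    exact phi_mul_swap_neg h hm
  · rw [if_neg hjm', if_neg hjm, if_neg hjm']
    exact phi_mul_swap_mul_swap h hm (by rw [abs_le] at hj ⊢; omega) hj0

lemma sum_cosetWeight (qp qm : ℂ) (n : ℕ) :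
    ∑ j ∈ (Finset.Icc (-((n : ℤ) + 1)) ((n : ℤ) + 1)).erase 0,
      cosetWeight qp qm ((n : ℤ) + 1) j = 1 + qm + 2 * n * qp := by
  have hJ : (Finset.Icc (-((n : ℤ) + 1)) ((n : ℤ) + 1)).erase 0 =
      insert ((n : ℤ) + 1) (insert (-((n : ℤ) + 1)) ((Finset.Icc (-(n : ℤ)) n).erase 0)) := by
    ext j; simp only [Finset.mem_erase, Finset.mem_Icc, Finset.mem_insert]; omega
  have hcard : ((Finset.Icc (-(n : ℤ)) n).erase 0).card = 2 * n := by
    rw [Finset.card_erase_of_mem (by simp), Int.card_Icc]; omega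
  have hmid : ∀ j ∈ (Finset.Icc (-(n : ℤ)) n).erase 0, cosetWeight qp qm ((n : ℤ) + 1) j = qp := by
    intro j hj
    have := Finset.mem_Icc.mp (Finset.mem_of_mem_erase hj)
    rw [cosetWeight, if_neg (by omega), if_neg (by omega)]
  rw [hJ, Finset.sum_insert
      (by simp only [Finset.mem_insert, Finset.mem_erase, Finset.mem_Icc]; omega),
    Finset.sum_insert (by simp only [Finset.mem_erase, Finset.mem_Icc]; omega),
    Finset.sum_congr rfl hmid, Finset.sum_const, hcard, cosetWeight, cosetWeight, if_pos rfl,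
    if_neg (by omega), if_pos rfl, nsmul_eq_mul]
  push_cast
  ring

lemma sum_phi_Bset_succ (qp qm : ℂ) (n : ℕ) :
    ∑ σ ∈ (finite_Bset (n + 1)).toFinset, phi qp qm σ =
      (1 + qm + 2 * n * qp) * ∑ σ ∈ (finite_Bset n).toFinset, phi qp qm σ := by
  rw [sum_Bset_succ, ← sum_cosetWeight, Finset.sum_mul]
  refine Finset.sum_congr rfl fun j hj => ?_
  rw [Finset.mul_sum]
  refine Finset.sum_congr rfl fun σ hσ => ?_
  have hj' := Finset.mem_erase.mp hj
  exact phi_mul_tau ((Set.Finite.mem_toFinset _).mp hσ) hj'.1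
    (abs_le.mpr (Finset.mem_Icc.mp hj'.2))

lemma phi_one (qp qm : ℂ) : phi qp qm 1 = 1 := by
  have h : ntOrbits (1 : Perm ℤ) = ∅ := Set.eq_empty_of_forall_notMem fun O ⟨i, hi, _⟩ => hi rfl
  simp [phi, expPlus, negCount, negOrbits, posOrbits, h]

lemma Bset_zero : Bset 0 = {1} := by
  refine Set.Subset.antisymm (fun σ h => Equiv.ext fun x => ?_) ?_
  · by_contra hx
    obtain ⟨hx0, hx⟩ := Bset.ne_zero_and_abs_le h hx
    exact hx0 (abs_nonpos_iff.mp (by exact_mod_cast hx))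
  · rintro _ rfl; exact ⟨fun _ => rfl, fun _ _ => rfl⟩

theorem finsum_phi_Bset (qp qm : ℂ) (n : ℕ) :
    ∑ᶠ σ ∈ Bset n, phi qp qm σ = ∏ k ∈ Finset.range n, (1 + qm + 2 * k * qp) := by
  induction n with
  | zero => rw [Bset_zero, finsum_mem_singleton, phi_one, Finset.prod_range_zero]
  | succ n ih =>
    rw [finsum_mem_eq_finite_toFinset_sum _ (finite_Bset n)] at ih
    rw [finsum_mem_eq_finite_toFinset_sum _ (finite_Bset (n + 1)), sum_phi_Bset_succ, ih,
      Finset.prod_range_succ, mul_comm]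

end ProductFormula

section Tensor

variable {α : Type*} {n : ℕ}

lemma inner00_smul_right {F G : Ksp α n} (c : ℂ) : inner00 F (c • G) = c * inner00 F G := by
  simp only [inner00, Finsupp.smul_apply, smul_eq_mul, Finsupp.mul_sum]
  exact Finsupp.sum_congr fun _ _ => by ring

variable [DecidableEq α]

lemma act_tpow (σ : Perm ℤ) (x : Hsp α) : act α n σ (tpow α x n) = tpow α x n := by
  rw [tpow, map_sum]
  simp only [act, Finsupp.lmapDomain_apply, Finsupp.mapDomain_single]
  refine Finset.sum_nbij' (· ∘ permRestrict n σ) (· ∘ (permRestrict n σ).symm)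
    (fun v hv => ?_) (fun v hv => ?_) (fun v _ => ?_) (fun v _ => ?_) fun v _ => ?_
  · rw [Fintype.mem_piFinset] at hv ⊢; exact fun i => hv _
  · rw [Fintype.mem_piFinset] at hv ⊢; exact fun i => hv _
  · funext i; simp
  · funext i; simp
  · exact congrArg _ (Equiv.prod_comp (permRestrict n σ) fun i => x (v i)).symm

lemma tpow_apply (x : Hsp α) (v : SIdx n → α) :
    tpow α x n v = ∏ i, x (v i) := by
  rw [tpow, Finset.sum_apply']
  simp only [Finsupp.single_apply]
  rw [Finset.sum_ite_eq']
  split_ifs with hv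
  · rfl
  · rw [Fintype.mem_piFinset, not_forall] at hv
    obtain ⟨i, hi⟩ := hv
    exact (Finset.prod_eq_zero (Finset.mem_univ i) (by simpa using hi)).symm

lemma inner00_tpow_cplx (x : α →₀ ℝ) :
    inner00 (tpow α (cplx x) n) (tpow α (cplx x) n) =
      (((x.sum fun _ c => c ^ 2 : ℝ)) : ℂ) ^ Fintype.card (SIdx n) := by
  have hsupp : (cplx x).support = x.support :=
    Finsupp.support_mapRange_of_injective (by simp) x Complex.ofReal_injective
  have hsub : (tpow α (cplx x) n).support ⊆ Fintype.piFinset fun _ => x.support := by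
    intro v hv
    rw [Finsupp.mem_support_iff, tpow_apply] at hv
    refine Fintype.mem_piFinset.mpr fun i => hsupp ▸ Finsupp.mem_support_iff.mpr fun h0 => ?_
    exact hv (Finset.prod_eq_zero (Finset.mem_univ i) h0)
  rw [inner00, Finsupp.sum_of_support_subset _ hsub _ fun v _ => by simp, Finsupp.sum,
    Complex.ofReal_sum, ← Finset.card_univ, ← Finset.prod_const, Finset.prod_univ_sum]
  refine Finset.sum_congr rfl fun v _ => ?_
  simp only [tpow_apply, cplx, Finsupp.mapRange_apply, map_prod, Complex.conj_ofReal,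
    ← Finset.prod_mul_distrib]
  push_cast
  ring_nf

lemma innerQ_tpow (x : α →₀ ℝ) (hx : (x.sum fun _ c => c ^ 2) = 1) (qp qm : ℂ) :
    innerQ α n qp qm (tpow α (cplx x) n) (tpow α (cplx x) n) =
      ∑ᶠ σ ∈ Bset n, phi qp qm σ := by
  have hP : Pop α n qp qm (tpow α (cplx x) n) =
      (∑ᶠ σ ∈ Bset n, phi qp qm σ) • tpow α (cplx x) n := by
    rw [Pop, finsum_mem_eq_finite_toFinset_sum _ (finite_Bset n),
      finsum_mem_eq_finite_toFinset_sum _ (finite_Bset n), LinearMap.sum_apply, Finset.sum_smul]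
    exact Finset.sum_congr rfl fun σ _ => by rw [LinearMap.smul_apply, act_tpow]
  rw [innerQ, hP, inner00_smul_right, inner00_tpow_cplx, hx]
  simp

end Tensor

open scoped ComplexOrder in
/-- exclusion principle: for q₊ = −1/(M+N), q₋ = (M−N)/(M+N) and a unit
vector x ∈ H_ℝ, the deformed square norm ⟨x^{⊗2n}, x^{⊗2n}⟩_{q₊,q₋} is positive for
n ≤ M and vanishes for n > M: at most M identical particles can occupy the state x⊗x. -/
theorem exclusion_principle (α : Type*) [DecidableEq α] (M N : ℕ) (hMN : 1 ≤ M + N)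
    (x : α →₀ ℝ) (hx : (x.sum fun _ c => c ^ 2) = 1) :
    (∀ n : ℕ, n ≤ M →
      0 < innerQ α n (-1 / ((M : ℂ) + (N : ℂ))) (((M : ℂ) - (N : ℂ)) / ((M : ℂ) + (N : ℂ)))
          (tpow α (cplx x) n) (tpow α (cplx x) n)) ∧
    (∀ n : ℕ, M < n →
      innerQ α n (-1 / ((M : ℂ) + (N : ℂ))) (((M : ℂ) - (N : ℂ)) / ((M : ℂ) + (N : ℂ)))
          (tpow α (cplx x) n) (tpow α (cplx x) n) = 0) := by
  have hMN' : (0 : ℝ) < M + N := by exact_mod_cast hMN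
  have hnorm : ∀ n : ℕ,
      innerQ α n (-1 / ((M : ℂ) + (N : ℂ))) (((M : ℂ) - (N : ℂ)) / ((M : ℂ) + (N : ℂ)))
        (tpow α (cplx x) n) (tpow α (cplx x) n) =
      ((∏ k ∈ Finset.range n, 2 * ((M : ℝ) - k) / (M + N) : ℝ) : ℂ) := by
    intro n
    have hMN'' : (M : ℂ) + N ≠ 0 := by exact_mod_cast hMN'.ne'
    rw [innerQ_tpow x hx, finsum_phi_Bset, Complex.ofReal_prod]
    refine Finset.prod_congr rfl fun k _ => ?_
    push_cast
    field_simp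
    ring
  refine ⟨fun n hn => ?_, fun n hn => ?_⟩
  · rw [hnorm, Complex.zero_lt_real]
    refine Finset.prod_pos fun k hk => div_pos ?_ hMN'
    have : (k : ℝ) < M := by exact_mod_cast (Finset.mem_range.mp hk).trans_le hn
    linarith
  · rw [hnorm, Finset.prod_eq_zero (Finset.mem_range.mpr hn) (by simp), Complex.ofReal_zero]

end TypeB
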